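/- arXiv:2510.00792 — 2 statements merged into one kernel-verified Lean document; each statement's English description precedes it below -/
import Mathlib

section
/- Let (R,μ) be a σ-finite nonatomic measure space with μ(R) = ∞. Then the space L^∞₀(R,μ) is not Fatou-representable: there is no rearrangement-invariant quasi-Banach lattice X̄ over (0,∞) (with Lebesgue measure) having the weak Fatou property such that ‖f‖_{L^∞₀} = ‖f*‖_{X̄} for every measurable function f on (R,μ), where ‖f‖_{L^∞₀} equals the essential supremum of |f| if f ∈ L^∞₀ and equals ∞ otherwise. -/
open MeasureTheory Set Filter
open scoped ENNReal NNReal Classical Topology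

noncomputable section

variable {α β : Type*} [MeasurableSpace α] [MeasurableSpace β]

/-- The nonincreasing rearrangement `f*` of `f`, as a function of `t : ℝ≥0∞`:
`f*(t) = inf {λ : μ(|f| > λ) ≤ t}`. -/
def rearr (μ : Measure α) (f : α → ℝ) (t : ℝ≥0∞) : ℝ≥0∞ :=
  sInf {l : ℝ≥0∞ | μ {x | l < (‖f x‖₊ : ℝ≥0∞)} ≤ t}

/-- The nonincreasing rearrangement as a real-valued function on `(0,∞) ⊆ ℝ`. -/
def rearrFun (μ : Measure α) (f : α → ℝ) (t : ℝ) : ℝ :=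
  (rearr μ f (ENNReal.ofReal t)).toReal

/-- A quasi-Banach lattice over `(α, μ)`: the collection of (a.e.-classes of) measurable
functions `f` with `N f < ∞`, where the functional `N` (extended by `∞` outside the space)
is a quasi-norm with the lattice property, and the space is complete. -/
structure QBLattice (μ : Measure α) where
  N : (α → ℝ) → ℝ≥0∞
  zero : N (fun _ => 0) = 0
  eq_zero : ∀ f : α → ℝ, AEMeasurable f μ → N f = 0 → f =ᵐ[μ] 0
  mem_aemeasurable : ∀ f : α → ℝ, N f < ⊤ → AEMeasurable f μ
  smul : ∀ (c : ℝ) (f : α → ℝ), N f < ⊤ → N (fun x => c * f x) = ENNReal.ofReal |c| * N f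
  quasi_triangle : ∃ K : ℝ≥0, 1 ≤ K ∧
    ∀ f g : α → ℝ, N (fun x => f x + g x) ≤ K * (N f + N g)
  lattice : ∀ f g : α → ℝ, AEMeasurable f μ → (∀ᵐ x ∂μ, |f x| ≤ |g x|) → N f ≤ N g
  complete : ∀ F : ℕ → α → ℝ, (∀ k, N (F k) < ⊤) →
    (∀ ε : ℝ≥0∞, 0 < ε → ∃ k₀ : ℕ, ∀ m k, k₀ ≤ m → k₀ ≤ k →
      N (fun x => F m x - F k x) < ε) →
    ∃ g : α → ℝ, N g < ⊤ ∧ Tendsto (fun k => N (fun x => F k x - g x)) atTop (nhds 0)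

/-- A quasi-Banach lattice is rearrangement-invariant if its functional only depends on the
nonincreasing rearrangement. -/
def QBLattice.RearrInv {μ : Measure α} (X : QBLattice μ) : Prop :=
  ∀ f g : α → ℝ, rearr μ f = rearr μ g → X.N f = X.N g

/-- The fundamental function of a (rearrangement-invariant) quasi-Banach lattice:
the common value of the quasi-norm on characteristic functions of sets of measure `t`. -/
def QBLattice.fund {μ : Measure α} (X : QBLattice μ) (t : ℝ≥0∞) : ℝ≥0∞ :=
  ⨅ (E : Set α) (_ : MeasurableSet E) (_ : μ E = t), X.N (E.indicator fun _ => (1 : ℝ))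

/-- The underlying set of a quasi-Banach lattice. -/
def QBLattice.carrier {μ : Measure α} (X : QBLattice μ) : Set (α → ℝ) :=
  {f | X.N f < ⊤}

/-- A `μ`-simple function written with positive coefficients and nested measurable sets of
finite measure. -/
def NestedSimple (μ : Measure α) (s : α → ℝ) : Prop :=
  ∃ (N : ℕ) (a : Fin N → ℝ) (E : Fin N → Set α),
    (∀ k, 0 < a k) ∧ (∀ k, MeasurableSet (E k)) ∧ (∀ k, μ (E k) < ⊤) ∧
    (∀ j k, j ≤ k → E j ⊆ E k) ∧
    s = fun x => ∑ k, a k * (E k).indicator (fun _ => (1 : ℝ)) x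

/-- The measure space is nonatomic. -/
def Nonatomic (μ : Measure α) : Prop :=
  ∀ s : Set α, MeasurableSet s → 0 < μ s →
    ∃ t ⊆ s, MeasurableSet t ∧ 0 < μ t ∧ μ t < μ s

/-- Continuous embedding `X ↪ Y` of quasi-Banach lattices. -/
def Embeds {μ : Measure α} (X Y : QBLattice μ) : Prop :=
  ∃ C : ℝ≥0, ∀ f : α → ℝ, Y.N f ≤ C * X.N f

/-- Boundedness of an operator `T : X → Y`. -/
def OpBounded {μ : Measure α} {ν : Measure β} (T : (α → ℝ) → β → ℝ)
    (X : QBLattice μ) (Y : QBLattice ν) : Prop :=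
  ∃ C : ℝ≥0, ∀ f : α → ℝ, Y.N (T f) ≤ C * X.N f

/-- `Y` is the optimal target for `(T, X, 𝓒)`. -/
def OptimalTarget {μ : Measure α} {ν : Measure β} (T : (α → ℝ) → β → ℝ)
    (X : QBLattice μ) (𝓒 : Set (QBLattice ν)) (Y : QBLattice ν) : Prop :=
  OpBounded T X Y ∧ ∀ Z ∈ 𝓒, OpBounded T X Z → Embeds Y Z

/-- A quasi-Banach lattice is normable if its quasi-norm is equivalent to a norm. -/
def Normable {μ : Measure α} (X : QBLattice μ) : Prop :=
  ∃ n : (α → ℝ) → ℝ≥0∞,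
    (∀ f g : α → ℝ, n (fun x => f x + g x) ≤ n f + n g) ∧
    (∀ (c : ℝ) (f : α → ℝ), n f < ⊤ → n (fun x => c * f x) = ENNReal.ofReal |c| * n f) ∧
    ∃ C : ℝ≥0, 0 < C ∧ ∀ f : α → ℝ, n f ≤ C * X.N f ∧ X.N f ≤ C * n f

/-- `T` is a sublinear operator defined on `X` with values in the (ν-a.e. finite)
measurable functions. -/
def SublinearOn {μ : Measure α} (ν : Measure β) (T : (α → ℝ) → β → ℝ)
    (X : QBLattice μ) : Prop :=
  (∀ f : α → ℝ, X.N f < ⊤ → AEMeasurable (T f) ν) ∧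
  (∀ f g : α → ℝ, X.N f < ⊤ → X.N g < ⊤ →
    ∀ᵐ y ∂ν, |T (fun x => f x + g x) y| ≤ |T f y| + |T g y|) ∧
  (∀ (c : ℝ) (f : α → ℝ), X.N f < ⊤ →
    ∀ᵐ y ∂ν, |T (fun x => c * f x) y| = |c| * |T f y|)

/-- `T` is simply approximable from above in the compatible triple `(T, X, 𝓒)`. -/
def SimplyApproxAbove {μ : Measure α} {ν : Measure β} (T : (α → ℝ) → β → ℝ)
    (X : QBLattice μ) (𝓒 : Set (QBLattice ν)) : Prop :=
  (∀ s : α → ℝ, NestedSimple μ s → X.N s < ⊤) ∧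
  ∃ S : (α → ℝ) → ℕ → α → ℝ,
    (∀ f : α → ℝ, X.N f < ⊤ → (∀ j, NestedSimple μ (S f j)) ∧
      Filter.limsup (fun j => X.N (S f j)) atTop ≤ X.N f) ∧
    ∀ Y ∈ 𝓒, ∃ C : ℝ≥0, 0 < C ∧ ∀ f : α → ℝ, X.N f < ⊤ →
      Y.N (T f) ≤ C * Filter.limsup (fun j => Y.N (T (S f j))) atTop

/-- The domain `[0, μ(R))` of the fundamental-type functions, as a subset of `ℝ`. -/
def edom (μ : Measure α) : Set ℝ :=
  {t : ℝ | 0 ≤ t ∧ ENNReal.ofReal t < μ Set.univ}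

/-- The Lorentz endpoint functional `‖f‖_{Λ_φ} = ∫₀^{μ(R)} f*(t) dφ(t)`
(a Lebesgue–Stieltjes integral). -/
def lorentzEndpoint (μ : Measure α) (φ : StieltjesFunction ℝ) (f : α → ℝ) : ℝ≥0∞ :=
  ∫⁻ t in edom μ, rearr μ f (ENNReal.ofReal t) ∂φ.measure

/-- The weak Fatou property with constant `C`. -/
def WeakFatouC {μ : Measure α} (Z : QBLattice μ) (C : ℝ≥0) : Prop :=
  ∀ (g : ℕ → α → ℝ) (f : α → ℝ), (∀ k, AEMeasurable (g k) μ) →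
    (∀ k, ∀ᵐ x ∂μ, 0 ≤ g k x ∧ g k x ≤ g (k + 1) x) →
    (∀ᵐ x ∂μ, Tendsto (fun k => g k x) atTop (nhds (f x))) →
    (⨆ k, Z.N (g k)) < ⊤ → Z.N f ≤ C * ⨆ k, Z.N (g k)

/-- The weak Fatou property. -/
def WeakFatou {μ : Measure α} (Z : QBLattice μ) : Prop :=
  ∃ C : ℝ≥0, 0 < C ∧ WeakFatouC Z C

/-- Lebesgue measure on the interval `(0, c) ⊆ ℝ` (equal to `(0,∞)` when `c = ∞`). -/
def intervalM (c : ℝ≥0∞) : Measure ℝ :=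
  (volume : Measure ℝ).restrict {t : ℝ | 0 < t ∧ ENNReal.ofReal t < c}

/-- A rearrangement-invariant quasi-Banach lattice `Y` over `(β, ν)` is Fatou-representable
if there is a rearrangement-invariant quasi-Banach lattice over `(0, ν(S))` with the weak
Fatou property representing the functional of `Y` via `‖f‖_Y = ‖f*‖_{Ȳ}`. -/
def FatouRepresentable {ν : Measure β} (Y : QBLattice ν) : Prop :=
  ∃ Ybar : QBLattice (intervalM (ν Set.univ)),
    Ybar.RearrInv ∧ WeakFatou Ybar ∧ ∀ f : β → ℝ, Y.N f = Ybar.N (rearrFun ν f)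

/-- The weak Lorentz functional `‖f‖_{q,∞}`; for `q = ∞` this is the essential supremum. -/
def weakNorm (μ : Measure α) (q : ℝ≥0∞) (f : α → ℝ) : ℝ≥0∞ :=
  if q = ⊤ then essSup (fun x => (‖f x‖₊ : ℝ≥0∞)) μ
  else ⨆ (s : ℝ) (_ : 0 < s), ENNReal.ofReal s * μ {x | s < |f x|} ^ (1 / q).toReal

/-- The `L^∞` functional (essential supremum). -/
def linftyNorm (μ : Measure α) (f : α → ℝ) : ℝ≥0∞ :=
  essSup (fun x => (‖f x‖₊ : ℝ≥0∞)) μ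

/-- The Lorentz functional `‖f‖_{p,q}` for `p, q ∈ (0,∞)`. -/
def lorentzNorm (μ : Measure α) (p q : ℝ) (f : α → ℝ) : ℝ≥0∞ :=
  (ENNReal.ofReal p * ∫⁻ s in Set.Ioi (0 : ℝ),
    (ENNReal.ofReal s * μ {x | s < |f x|} ^ (1 / p)) ^ q * (ENNReal.ofReal s)⁻¹) ^ (1 / q)

/-- The functional of `L^∞₀`: the essential sup norm for essentially bounded functions
supported in a set of finite measure, and `∞` otherwise. -/
def Linf0 (μ : Measure α) (f : α → ℝ) : ℝ≥0∞ :=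
  if (∃ E : Set α, MeasurableSet E ∧ μ E < ⊤ ∧ ∀ᵐ x ∂μ, x ∉ E → f x = 0) ∧
      linftyNorm μ f < ⊤
  then linftyNorm μ f else ⊤

/-- The operator `R_σ g(t) = t^{-1/q} ∫₀^{t^m} g(s) s^{1/p - 1} ds` for `σ = [p,q,m]`
(with `t^{-1/q} = 1` when `q = ∞` and `s^{1/p} = 1` when `p = ∞`). -/
def Rop (p q : ℝ≥0∞) (m : ℝ) (g : ℝ → ℝ) (t : ℝ) : ℝ≥0∞ :=
  ENNReal.ofReal t ^ (-(1 / q).toReal) *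
    ∫⁻ s in Set.Ioc (0 : ℝ) (t ^ m),
      ENNReal.ofReal (g s) * ENNReal.ofReal s ^ ((1 / p).toReal - 1)

/-- The operator `S⁰_σ g(t) = t^{-1/q} sup_{0 < s ≤ t^m} g(s) s^{1/p}` for `σ = [p,q,m]`. -/
def S0op (p q : ℝ≥0∞) (m : ℝ) (g : ℝ → ℝ) (t : ℝ) : ℝ≥0∞ :=
  ENNReal.ofReal t ^ (-(1 / q).toReal) *
    ⨆ (s : ℝ) (_ : 0 < s) (_ : s ≤ t ^ m),
      ENNReal.ofReal (g s) * ENNReal.ofReal s ^ (1 / p).toReal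

/-- The operator `H_σ g(t) = t^{-1/q} ∫_{t^m}^∞ g(s) s^{1/p - 1} ds` for `σ = [p,q,m]`. -/
def Hop (p q : ℝ≥0∞) (m : ℝ) (g : ℝ → ℝ) (t : ℝ) : ℝ≥0∞ :=
  ENNReal.ofReal t ^ (-(1 / q).toReal) *
    ∫⁻ s in Set.Ioi (t ^ m),
      ENNReal.ofReal (g s) * ENNReal.ofReal s ^ ((1 / p).toReal - 1)

/-- The operator `S^∞_σ g(t) = t^{-1/q} sup_{t^m ≤ s < ∞} g(s) s^{1/p}` for `σ = [p,q,m]`. -/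
def Sinfop (p q : ℝ≥0∞) (m : ℝ) (g : ℝ → ℝ) (t : ℝ) : ℝ≥0∞ :=
  ENNReal.ofReal t ^ (-(1 / q).toReal) *
    ⨆ (s : ℝ) (_ : t ^ m ≤ s),
      ENNReal.ofReal (g s) * ENNReal.ofReal s ^ (1 / p).toReal

/-- The characteristic function of the interval `(0, a)` for `a : ℝ≥0∞`. -/
def chiInterval (a : ℝ≥0∞) : ℝ → ℝ :=
  Set.indicator {s : ℝ | 0 < s ∧ ENNReal.ofReal s < a} fun _ => 1

/-- The Riesz potential `I_γ f(x) = c_γ ∫ f(y) |x - y|^{γ - n} dy` on `ℝⁿ`. -/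
def riesz (n : ℕ) (γ : ℝ) (f : EuclideanSpace ℝ (Fin n) → ℝ)
    (x : EuclideanSpace ℝ (Fin n)) : ℝ :=
  (Real.pi ^ ((n : ℝ) / 2) * 2 ^ γ * Real.Gamma (γ / 2) / Real.Gamma (((n : ℝ) - γ) / 2)) *
    ∫ y, f y * ‖x - y‖ ^ (γ - (n : ℝ))

/-- The Hardy–Littlewood maximal operator on `ℝⁿ` (supremum over all balls containing `x`). -/
def hlMax {n : ℕ} (f : EuclideanSpace ℝ (Fin n) → ℝ) (x : EuclideanSpace ℝ (Fin n)) : ℝ :=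
  (⨆ (z : EuclideanSpace ℝ (Fin n)) (r : ℝ) (_ : 0 < r) (_ : x ∈ Metric.ball z r),
    (volume (Metric.ball z r))⁻¹ * ∫⁻ y in Metric.ball z r, (‖f y‖₊ : ℝ≥0∞)).toReal


/-! The spanning sets `Eₖ` of the σ-finite space satisfy `‖χ_{Eₖ}‖_{L^∞₀} ≤ 1`, and their
rearrangements `χ_{(0, μ(Eₖ))}` increase to `1`, because `μ(Eₖ) ↑ μ(R) = ∞`. Since `1` is also
the rearrangement of `χ_R`, a representing lattice with the weak Fatou property (constant `C`)
would give `‖χ_R‖_{L^∞₀} ≤ C`; but `χ_R` is not supported on a set of finite measure, so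
`‖χ_R‖_{L^∞₀} = ∞`. -/

theorem rearr_indicator_one (μ : Measure α) (E : Set α)
    (s : ℝ≥0∞) :
    rearr μ (E.indicator fun _ => (1 : ℝ)) s = if s < μ E then 1 else 0 := by
  have hlevel : ∀ l : ℝ≥0∞,
      {x | l < (‖E.indicator (fun _ => (1 : ℝ)) x‖₊ : ℝ≥0∞)} = if l < 1 then E else ∅ := by
    intro l
    ext x
    by_cases hx : x ∈ E <;> split_ifs with hl <;> simp [hx, hl]
  unfold rearr
  simp only [hlevel]
  split_ifs with hs
  · refine le_antisymm (sInf_le (by simp)) (le_sInf fun l hl => ?_)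
    by_contra! hl1
    simp only [mem_ofPred_eq, if_pos hl1] at hl
    exact hl.not_gt hs
  · exact le_antisymm (sInf_le (by simpa using hs)) zero_le

theorem rearrFun_indicator_one (μ : Measure α) (E : Set α) :
    rearrFun μ (E.indicator fun _ => (1 : ℝ)) =
      {t : ℝ | ENNReal.ofReal t < μ E}.indicator fun _ => 1 := by
  ext t
  by_cases ht : ENNReal.ofReal t < μ E <;> simp [rearrFun, rearr_indicator_one, ht]

theorem rearrFun_one {μ : Measure α} (hμ : μ univ = ⊤) :
    rearrFun μ (fun _ => (1 : ℝ)) = fun _ => 1 := by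
  rw [← indicator_univ (fun _ : α => (1 : ℝ)), rearrFun_indicator_one, hμ]
  ext t
  simp

theorem linftyNorm_indicator_one_le (μ : Measure α) (E : Set α) : linftyNorm μ (E.indicator fun _ => (1 : ℝ)) ≤ 1 :=
  essSup_le_of_ae_le _ <| Eventually.of_forall fun x => by
    by_cases hx : x ∈ E <;> simp [hx]

theorem Linf0_indicator_one_le (μ : Measure α) {E : Set α}
    (hE : MeasurableSet E) (hμE : μ E < ⊤) : Linf0 μ (E.indicator fun _ => (1 : ℝ)) ≤ 1 := by
  have hsupp : ∀ᵐ x ∂μ, x ∉ E → E.indicator (fun _ => (1 : ℝ)) x = 0 :=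
    Eventually.of_forall fun _ hx => indicator_of_notMem hx _
  rw [Linf0, if_pos ⟨⟨E, hE, hμE, hsupp⟩,
    (linftyNorm_indicator_one_le μ E).trans_lt ENNReal.one_lt_top⟩]
  exact linftyNorm_indicator_one_le μ E

theorem Linf0_one_eq_top {μ : Measure α} (hμ : μ univ = ⊤) : Linf0 μ (fun _ => (1 : ℝ)) = ⊤ := by
  rw [Linf0, if_neg]
  rintro ⟨⟨E, hE, hμE, hsupp⟩, -⟩
  have hEc : μ Eᶜ = 0 := measure_eq_zero_iff_ae_notMem.mpr <|
    hsupp.mono fun x hx hxE => one_ne_zero (hx hxE)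
  have := measure_add_measure_compl (μ := μ) hE
  rw [hEc, add_zero, hμ] at this
  exact hμE.ne this

theorem WeakFatouC.N_indicator_iUnion_le {ν : Measure β} {Z : QBLattice ν} {C : ℝ≥0} (hZ : WeakFatouC Z C) {S : ℕ → Set β} (hS : Monotone S)
    (hSm : ∀ k, MeasurableSet (S k))
    (hbdd : (⨆ k, Z.N ((S k).indicator fun _ => (1 : ℝ))) < ⊤) :
    Z.N ((⋃ k, S k).indicator fun _ => (1 : ℝ)) ≤
      C * ⨆ k, Z.N ((S k).indicator fun _ => (1 : ℝ)) := by
  refine hZ _ _ (fun k => (measurable_const.indicator (hSm k)).aemeasurable)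
    (fun k => Eventually.of_forall fun t => ⟨indicator_nonneg (fun _ _ => zero_le_one) t,
      indicator_le_indicator_of_subset (hS k.le_succ) (fun _ => zero_le_one) t⟩)
    (Eventually.of_forall fun t => ?_) hbdd
  by_cases ht : t ∈ ⋃ k, S k
  · obtain ⟨k₀, hk₀⟩ := mem_iUnion.mp ht
    refine tendsto_atTop_of_eventually_const (i₀ := k₀) fun k hk => ?_
    rw [indicator_of_mem (hS hk hk₀), indicator_of_mem ht]
  · rw [indicator_of_notMem ht]
    refine tendsto_const_nhds.congr fun k => (indicator_of_notMem ?_ _).symm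
    exact fun htk => ht (mem_iUnion_of_mem k htk)

theorem iUnion_ofReal_lt_eq_univ {c : ℕ → ℝ≥0∞} (hc : ⨆ k, c k = ⊤) :
    ⋃ k, {t : ℝ | ENNReal.ofReal t < c k} = univ :=
  eq_univ_of_forall fun t => mem_iUnion.mpr <|
    lt_iSup_iff.mp (hc ▸ ENNReal.ofReal_lt_top : ENNReal.ofReal t < ⨆ k, c k)

theorem Linf0_not_Fatou_representable_general
    {α : Type*} [MeasurableSpace α] (μ : Measure α) [SigmaFinite μ]
    (hμ : μ Set.univ = ⊤) :
    ¬ ∃ Xbar : QBLattice (intervalM (μ Set.univ)),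
        Xbar.RearrInv ∧ WeakFatou Xbar ∧
        ∀ f : α → ℝ, Linf0 μ f = Xbar.N (rearrFun μ f) := by
  rintro ⟨Xbar, -, ⟨C, -, hC⟩, hrep⟩
  set S : ℕ → Set ℝ := fun k => {t | ENNReal.ofReal t < μ (spanningSets μ k)}
  have hS : Monotone S := fun j k hjk t (ht : _ < _) =>
    ht.trans_le (measure_mono (monotone_spanningSets μ hjk))
  have hSm : ∀ k, MeasurableSet (S k) := fun k =>
    measurableSet_lt ENNReal.measurable_ofReal measurable_const
  have hbound : (⨆ k, Xbar.N ((S k).indicator fun _ => (1 : ℝ))) ≤ 1 := iSup_le fun k => by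
    rw [← rearrFun_indicator_one, ← hrep]
    exact Linf0_indicator_one_le μ (measurableSet_spanningSets μ k)
      (measure_spanningSets_lt_top μ k)
  have hunion : ⋃ k, S k = univ := iUnion_ofReal_lt_eq_univ <| by
    rw [← (monotone_spanningSets μ).directed_le.measure_iUnion, iUnion_spanningSets, hμ]
  have hfatou := hC.N_indicator_iUnion_le hS hSm (hbound.trans_lt ENNReal.one_lt_top)
  have hone : Xbar.N (fun _ => 1) = ⊤ := by rw [← rearrFun_one hμ, ← hrep, Linf0_one_eq_top hμ]
  rw [hunion, indicator_univ, hone] at hfatou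
  exact ENNReal.coe_ne_top (top_le_iff.mp (hfatou.trans (mul_le_of_le_one_right' hbound)))

/-- if `μ(R) = ∞`, then `L^∞₀(R,μ)` is not Fatou-representable. -/
theorem Linf0_not_Fatou_representable
    {α : Type*} [MeasurableSpace α] (μ : Measure α) [SigmaFinite μ]
    (hna : Nonatomic μ) (hμ : μ Set.univ = ⊤) :
    ¬ ∃ Xbar : QBLattice (intervalM (μ Set.univ)),
        Xbar.RearrInv ∧ WeakFatou Xbar ∧
        ∀ f : α → ℝ, Linf0 μ f = Xbar.N (rearrFun μ f) :=
  Linf0_not_Fatou_representable_general μ hμ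
end
end

section
/- Let n ∈ ℕ, and let M denote the Hardy–Littlewood maximal operator on ℝⁿ. Let X be a rearrangement-invariant quasi-Banach lattice over ℝⁿ (with Lebesgue measure) containing simple functions such that X ↪ L^1(ℝⁿ) continuously and limsup_{t→0⁺} t^{-1} φ_X(t) < ∞. Then L^{1,∞}(ℝⁿ) is the optimal target for (M, X, 𝒞), where 𝒞 is the collection of all rearrangement-invariant quasi-Banach lattices over ℝⁿ that are Fatou-representable: M : X → L^{1,∞}(ℝⁿ) is bounded, and for every Y ∈ 𝒞 such that M : X → Y is bounded, L^{1,∞}(ℝⁿ) ↪ Y. -/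
open MeasureTheory Set Filter
open scoped ENNReal NNReal Classical Topology

noncomputable section

variable {α β : Type*} [MeasurableSpace α] [MeasurableSpace β]

/-!
`M` is of weak type `(1, 1)` by the Vitali covering lemma, so `X ↪ L¹` gives `M : X → L^{1,∞}`.

For optimality, let `g_r = |B_r|⁻¹ χ_{B_r}` with `B_r` the ball of radius `r` about `0`. Since
`φ_X(t) ≲ t` near `0` and `X` is rearrangement-invariant, the `g_r` with small `r` are bounded in
`X`, hence the `M g_r` are bounded in `Y`. Because `M g_r(x) ≥ |B_{|x| + r}|⁻¹`, the
rearrangement satisfies `(M g_r)^*(t) ≥ 2⁻ⁿ / (t + |B_r|)`, which increases to `2⁻ⁿ / t` as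
`r → 0`. The weak Fatou property of the representation space of `Y` puts `t ↦ 1/t` into it, and
every `f` satisfies `f^*(t) ≤ ‖f‖_{1,∞} / t`.
-/

open Metric Module

section Rearrangement

variable {μ : Measure α}

theorem rearr_le_of_measure_le {f : α → ℝ} {t l : ℝ≥0∞}
    (h : μ {x | l < (‖f x‖₊ : ℝ≥0∞)} ≤ t) : rearr μ f t ≤ l :=
  sInf_le h

theorem le_rearr_of_forall_lt {f : α → ℝ} {t L : ℝ≥0∞}
    (h : ∀ l < L, t < μ {x | l < (‖f x‖₊ : ℝ≥0∞)}) : L ≤ rearr μ f t :=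
  le_sInf fun l hl => not_lt.1 fun hlL => (h l hlL).not_ge hl

theorem le_rearr_of_lt_measure {f : α → ℝ} {t L : ℝ≥0∞} {S : Set α} (hS : t < μ S)
    (hL : ∀ x ∈ S, L ≤ (‖f x‖₊ : ℝ≥0∞)) : L ≤ rearr μ f t :=
  le_rearr_of_forall_lt fun _ hl => hS.trans_le (measure_mono fun x hx => hl.trans_le (hL x hx))

theorem rearr_antitone (f : α → ℝ) : Antitone (rearr μ f) :=
  fun _ _ hst => sInf_le_sInf fun _ hl => hl.trans hst

theorem measurable_rearrFun (f : α → ℝ) : Measurable (rearrFun μ f) :=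
  have h : Antitone fun s : ℝ => rearr μ f (ENNReal.ofReal s) :=
    fun _ _ hst => rearr_antitone f (ENNReal.ofReal_le_ofReal hst)
  ENNReal.measurable_toReal.comp h.measurable

theorem rearrFun_nonneg (μ : Measure α) (f : α → ℝ) (t : ℝ) : 0 ≤ rearrFun μ f t :=
  ENNReal.toReal_nonneg

theorem rearr_le_of_forall_le {f : α → ℝ} {c : ℝ≥0∞} (h : ∀ x, (‖f x‖₊ : ℝ≥0∞) ≤ c)
    (t : ℝ≥0∞) : rearr μ f t ≤ c :=
  rearr_le_of_measure_le <| by simp [fun x => not_lt.2 (h x)]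

theorem rearr_indicator_one_eq {E F : Set α} (h : μ E = μ F) :
    rearr μ (E.indicator fun _ => (1 : ℝ)) = rearr μ (F.indicator fun _ => (1 : ℝ)) := by
  have level (G : Set α) (l : ℝ≥0∞) :
      {x | l < (‖G.indicator (fun _ => (1 : ℝ)) x‖₊ : ℝ≥0∞)} = if l < 1 then G else ∅ := by
    ext x
    by_cases hx : x ∈ G <;> split_ifs <;> simp_all
  funext t
  simp only [rearr, level]
  congr 1
  ext l
  by_cases hl : l < 1 <;> simp [hl, h]

theorem weakNorm_one_eq (f : α → ℝ) :
    weakNorm μ 1 f = ⨆ (s : ℝ) (_ : 0 < s), ENNReal.ofReal s * μ {x | s < |f x|} := by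
  simp [weakNorm]

theorem mul_measure_lt_le_weakNorm_one (f : α → ℝ) (l : ℝ≥0∞) :
    l * μ {x | l < (‖f x‖₊ : ℝ≥0∞)} ≤ weakNorm μ 1 f := by
  rcases eq_or_ne l 0 with rfl | hl0
  · simp
  rcases eq_or_ne l ⊤ with rfl | hltop
  · simp
  obtain ⟨s, hs, rfl⟩ : ∃ s : ℝ, 0 < s ∧ l = ENNReal.ofReal s :=
    ⟨l.toReal, ENNReal.toReal_pos hl0 hltop, (ENNReal.ofReal_toReal hltop).symm⟩
  have hset : {x | ENNReal.ofReal s < (‖f x‖₊ : ℝ≥0∞)} = {x | s < |f x|} := by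
    ext x
    simp only [mem_ofPred_eq, ← enorm_eq_nnnorm, Real.enorm_eq_ofReal_abs,
      ENNReal.ofReal_lt_ofReal_iff_of_nonneg hs.le]
  rw [weakNorm_one_eq, hset]
  exact le_iSup₂_of_le (f := fun s (_ : 0 < s) => ENNReal.ofReal s * μ {x | s < |f x|}) s hs le_rfl

theorem rearr_le_weakNorm_div (f : α → ℝ) (t : ℝ≥0∞) :
    rearr μ f t ≤ weakNorm μ 1 f / t := by
  refine le_of_forall_gt_imp_ge_of_dense fun l hl => rearr_le_of_measure_le ?_
  rcases eq_or_ne l ⊤ with rfl | hltop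
  · simp
  have hl0 : l ≠ 0 := ne_bot_of_gt hl
  by_contra! hlt
  have hmul : l * t ≤ weakNorm μ 1 f :=
    (mul_le_mul_right hlt.le l).trans (mul_measure_lt_le_weakNorm_one f l)
  have hW0 : weakNorm μ 1 f ≠ 0 := ne_bot_of_gt <|
    (ENNReal.mul_pos hl0 (ne_bot_of_gt hlt)).trans_le (mul_measure_lt_le_weakNorm_one f l)
  exact hl.not_ge ((ENNReal.le_div_iff_mul_le (Or.inr hW0) (Or.inl hlt.ne_top)).2 hmul)

end Rearrangement

theorem QBLattice.RearrInv.N_indicator_le_fund {μ : Measure α} {X : QBLattice μ}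
    (hX : X.RearrInv) (E : Set α) : X.N (E.indicator fun _ => 1) ≤ X.fund (μ E) :=
  le_iInf₂ fun _ _ => le_iInf fun hF => (hX _ _ (rearr_indicator_one_eq hF.symm)).le

theorem ENNReal.exists_eventually_le_mul_of_limsup_lt_top {φ : ℝ≥0∞ → ℝ≥0∞}
    (h : limsup (fun t => t ^ (-(1 : ℝ)) * φ t) (𝓝[>] 0) < ⊤) :
    ∃ B ≠ ⊤, ∀ᶠ t in 𝓝[>] 0, φ t ≤ B * t := by
  refine ⟨_ + 1, ENNReal.add_ne_top.2 ⟨h.ne, ENNReal.one_ne_top⟩, ?_⟩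
  filter_upwards [eventually_lt_of_limsup_lt (ENNReal.lt_add_right h.ne one_ne_zero),
    self_mem_nhdsWithin, nhdsWithin_le_nhds (eventually_lt_nhds ENNReal.zero_lt_top)]
    with t hlt ht0 httop
  rw [ENNReal.rpow_neg_one] at hlt
  calc φ t = t⁻¹ * φ t * t := by
        rw [mul_comm t⁻¹, mul_assoc, ENNReal.inv_mul_cancel ht0.ne' httop.ne, mul_one]
    _ ≤ _ := mul_le_mul_left hlt.le t

theorem QBLattice.limsup_inv_mul_fund_eq_top [Subsingleton α] {μ : Measure α}
    (X : QBLattice μ) : limsup (fun t => t ^ (-(1 : ℝ)) * X.fund t) (𝓝[>] 0) = ⊤ := by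
  have hne : ∀ᶠ t in 𝓝[>] (0 : ℝ≥0∞), t ≠ μ univ := by
    rcases eq_or_ne (μ univ) 0 with h0 | h0
    · filter_upwards [self_mem_nhdsWithin] with t ht using h0 ▸ ht.ne'
    · exact nhdsWithin_le_nhds (eventually_ne_nhds h0.symm)
  have htop : ∀ᶠ t in 𝓝[>] (0 : ℝ≥0∞), t ^ (-(1 : ℝ)) * X.fund t = ⊤ := by
    filter_upwards [hne, self_mem_nhdsWithin,
      nhdsWithin_le_nhds (eventually_lt_nhds ENNReal.zero_lt_top)] with t htu ht0 httop
    have hfund : X.fund t = ⊤ := by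
      refine iInf₂_eq_top.2 fun E _ => iInf_eq_top.2 fun hE => ?_
      rcases E.eq_empty_or_nonempty with rfl | ⟨x, hx⟩
      · exact absurd hE.symm (by simpa using ht0.ne')
      · exact absurd (hE ▸ congrArg μ (Subsingleton.eq_univ_of_nonempty ⟨x, hx⟩)) htu
    rw [hfund, ENNReal.rpow_neg_one, ENNReal.mul_top (ENNReal.inv_ne_zero.2 httop.ne)]
  rw [limsup_congr htop, limsup_const]

def normalizedIndicator (μ : Measure α) (E : Set α) (x : α) : ℝ :=
  (μ.real E)⁻¹ * E.indicator (fun _ => 1) x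

theorem enorm_normalizedIndicator_le (μ : Measure α) (E : Set α) (x : α) :
    ‖normalizedIndicator μ E x‖ₑ ≤ ENNReal.ofReal (μ.real E)⁻¹ := by
  rw [Real.enorm_eq_ofReal_abs]
  gcongr
  by_cases hx : x ∈ E <;> simp [normalizedIndicator, hx, abs_of_nonneg measureReal_nonneg]

theorem setLIntegral_enorm_normalizedIndicator {μ : Measure α} {E : Set α}
    (hE : MeasurableSet E) (h0 : μ E ≠ 0) (htop : μ E ≠ ⊤) :
    ∫⁻ x in E, ‖normalizedIndicator μ E x‖ₑ ∂μ = 1 := by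
  have hpos : 0 < μ.real E := ENNReal.toReal_pos h0 htop
  rw [setLIntegral_congr_fun hE fun x hx => by
      rw [normalizedIndicator, indicator_of_mem hx, mul_one, Real.enorm_eq_ofReal (by positivity)],
    setLIntegral_const, ENNReal.ofReal_inv_of_pos hpos, measureReal_def,
    ENNReal.ofReal_toReal htop, ENNReal.inv_mul_cancel h0 htop]

theorem QBLattice.RearrInv.N_normalizedIndicator_le {μ : Measure α} {X : QBLattice μ}
    (hX : X.RearrInv) {E : Set α} (h0 : μ E ≠ 0) (htop : μ E ≠ ⊤) {B : ℝ≥0∞} (hB : B ≠ ⊤)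
    (hfund : X.fund (μ E) ≤ B * μ E) : X.N (normalizedIndicator μ E) ≤ B := by
  have hpos : 0 < μ.real E := ENNReal.toReal_pos h0 htop
  have hind := (hX.N_indicator_le_fund E).trans hfund
  calc X.N (normalizedIndicator μ E)
      = ENNReal.ofReal (μ.real E)⁻¹ * X.N (E.indicator fun _ => 1) :=
        X.smul _ _ (hind.trans_lt (by finiteness)) |>.trans (by rw [abs_inv, abs_of_pos hpos])
    _ ≤ ENNReal.ofReal (μ.real E)⁻¹ * (B * μ E) := by gcongr
    _ = B := by
      rw [ENNReal.ofReal_inv_of_pos hpos, measureReal_def, ENNReal.ofReal_toReal htop,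
        mul_left_comm, ENNReal.inv_mul_cancel h0 htop, mul_one]

theorem ENNReal.exists_le_coe_mul_of_forall_ne_top {γ : Type*} {N W : γ → ℝ≥0∞} {D : ℝ≥0∞}
    (hD : D ≠ ⊤) (h : ∀ f, W f ≠ ⊤ → N f ≤ D * W f) : ∃ C : ℝ≥0, ∀ f, N f ≤ C * W f := by
  refine ⟨D.toNNReal + 1, fun f => ?_⟩
  rcases eq_or_ne (W f) ⊤ with hW | hW
  · simp [hW]
  calc N f ≤ D * W f := h f hW
    _ ≤ (D.toNNReal + 1 : ℝ≥0) * W f := by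
      gcongr
      rw [ENNReal.coe_add, ENNReal.coe_toNNReal hD]
      exact le_self_add

theorem rearrFun_le_div {μ : Measure α} (f : α → ℝ) (hW : weakNorm μ 1 f ≠ ⊤) {t : ℝ}
    (ht : 0 < t) : rearrFun μ f t ≤ (weakNorm μ 1 f).toReal / t := by
  have hdiv : weakNorm μ 1 f / ENNReal.ofReal t ≠ ⊤ :=
    ENNReal.div_ne_top hW (ENNReal.ofReal_pos.2 ht).ne'
  calc rearrFun μ f t ≤ (weakNorm μ 1 f / ENNReal.ofReal t).toReal :=
        ENNReal.toReal_mono hdiv (rearr_le_weakNorm_div f _)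
    _ = (weakNorm μ 1 f).toReal / t := by rw [ENNReal.toReal_div, ENNReal.toReal_ofReal ht.le]

theorem ae_pos_intervalM (c : ℝ≥0∞) : ∀ᵐ t ∂intervalM c, 0 < t :=
  ae_restrict_of_forall_mem (measurableSet_lt measurable_const measurable_id |>.inter
    (measurableSet_lt ENNReal.measurable_ofReal measurable_const)) fun _ ht => ht.1

theorem WeakFatouC.N_const_div_le {μ : Measure ℝ} {Z : QBLattice μ} {C : ℝ≥0}
    (hZ : WeakFatouC Z C) (hpos : ∀ᵐ t ∂μ, 0 < t) {κ : ℝ} (hκ : 0 ≤ κ) {v : ℕ → ℝ}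
    (hv : Antitone v) (hlim : Tendsto v atTop (𝓝 0)) {A : ℝ≥0∞} (hA : A ≠ ⊤)
    (hbound : ∀ k, Z.N (fun t => κ / (t + v k)) ≤ A) :
    Z.N (fun t => κ / t) ≤ C * A := by
  have hv0 : ∀ k, 0 ≤ v k := fun k => hv.le_of_tendsto hlim k
  have hsup : (⨆ k, Z.N (fun t => κ / (t + v k))) ≤ A := iSup_le hbound
  refine (hZ _ _ (fun k => by fun_prop) (fun k => hpos.mono fun t ht => ?_)
    (hpos.mono fun t ht => ?_) (hsup.trans_lt hA.lt_top)).trans (by gcongr)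
  · have hk : 0 < t + v (k + 1) := by linarith [hv0 (k + 1)]
    exact ⟨div_nonneg hκ (by linarith [hv0 k]),
      div_le_div_of_nonneg_left hκ hk (by linarith [hv k.le_succ])⟩
  · have := (tendsto_const_nhds (x := t)).add hlim
    rw [add_zero] at this
    exact tendsto_const_nhds.div this ht.ne'

theorem FatouRepresentable.exists_le_mul_weakNorm {ν : Measure β} {Y : QBLattice ν}
    (hY : FatouRepresentable Y) {h : ℕ → β → ℝ} {A : ℝ≥0∞} (hA : A ≠ ⊤)
    (hYh : ∀ k, Y.N (h k) ≤ A) {κ : ℝ} (hκ : 0 < κ) {v : ℕ → ℝ} (hv : Antitone v)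
    (hlim : Tendsto v atTop (𝓝 0)) (hlow : ∀ k t, 0 < t → κ / (t + v k) ≤ rearrFun ν (h k) t) :
    ∃ C : ℝ≥0, ∀ f, Y.N f ≤ C * weakNorm ν 1 f := by
  obtain ⟨Z, -, ⟨CF, -, hF⟩, hrep⟩ := hY
  have hpos := ae_pos_intervalM (ν univ)
  have hv0 : ∀ k, 0 ≤ v k := fun k => hv.le_of_tendsto hlim k
  have hZu (k : ℕ) : Z.N (fun t => κ / (t + v k)) ≤ A := by
    refine (Z.lattice _ _ (by fun_prop) (hpos.mono fun t ht => ?_)).trans ((hrep _).symm ▸ hYh k)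
    have hk : 0 ≤ κ / (t + v k) := div_nonneg hκ.le (by linarith [hv0 k])
    rw [abs_of_nonneg hk, abs_of_nonneg (hk.trans (hlow k t ht))]
    exact hlow k t ht
  have hψ : Z.N (fun t => κ / t) ≤ CF * A := hF.N_const_div_le hpos hκ.le hv hlim hA hZu
  refine ENNReal.exists_le_coe_mul_of_forall_ne_top (D := CF * A / ENNReal.ofReal κ)
    (by finiteness) fun f hW => ?_
  set W := weakNorm ν 1 f
  have hdom : ∀ᵐ t ∂intervalM (ν univ), |rearrFun ν f t| ≤ |W.toReal / κ * (κ / t)| :=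
    hpos.mono fun t ht => by
      rw [abs_of_nonneg (rearrFun_nonneg ν f t), abs_of_nonneg (by positivity),
        div_mul_div_cancel₀ hκ.ne']
      exact rearrFun_le_div f hW ht
  calc Y.N f = Z.N (rearrFun ν f) := hrep f
    _ ≤ Z.N (fun t => W.toReal / κ * (κ / t)) :=
      Z.lattice _ _ (measurable_rearrFun f).aemeasurable hdom
    _ = ENNReal.ofReal (W.toReal / κ) * Z.N (fun t => κ / t) := by
      rw [Z.smul _ _ (hψ.trans_lt (by finiteness)), abs_of_nonneg (by positivity)]
    _ ≤ ENNReal.ofReal (W.toReal / κ) * (CF * A) := by gcongr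
    _ = CF * A / ENNReal.ofReal κ * W := by
      rw [ENNReal.ofReal_div_of_pos hκ, ENNReal.ofReal_toReal hW, div_eq_mul_inv,
        div_eq_mul_inv]
      ring

theorem mul_measure_biUnion_ball_le {E : Type*} [NormedAddCommGroup E] [NormedSpace ℝ E]
    [FiniteDimensional ℝ E] [MeasurableSpace E] [BorelSpace E] (μ : Measure E)
    [μ.IsAddHaarMeasure] {ι : Type*} {t : Set ι} {z : ι → E} {r : ι → ℝ}
    (hr : ∀ i ∈ t, 0 < r i) {R : ℝ} (hR : ∀ i ∈ t, r i ≤ R) {g : E → ℝ≥0∞} {s : ℝ≥0∞}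
    (hball : ∀ i ∈ t, s * μ (ball (z i) (r i)) ≤ ∫⁻ y in ball (z i) (r i), g y ∂μ) :
    s * μ (⋃ i ∈ t, ball (z i) (r i)) ≤ 4 ^ finrank ℝ E * ∫⁻ y, g y ∂μ := by
  obtain ⟨u, hut, hdisj, hcover⟩ :=
    Vitali.exists_disjoint_subfamily_covering_enlargement_closedBall t z r R hR 4 (by norm_num)
  have hdisj' : u.PairwiseDisjoint fun i => ball (z i) (r i) :=
    hdisj.mono fun _ => ball_subset_closedBall
  have hu : u.Countable :=
    hdisj'.countable_of_isOpen (fun _ _ => isOpen_ball) fun i hi => nonempty_ball.2 (hr i (hut hi))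
  have hsub : ⋃ i ∈ t, ball (z i) (r i) ⊆ ⋃ i ∈ u, closedBall (z i) (4 * r i) :=
    iUnion₂_subset fun i hi =>
      let ⟨j, hj, hij⟩ := hcover i hi
      ball_subset_closedBall.trans <| hij.trans <|
        subset_biUnion_of_mem (u := fun i => closedBall (z i) (4 * r i)) hj
  have hdouble (i : u) :
      μ (closedBall (z i) (4 * r i)) = 4 ^ finrank ℝ E * μ (ball (z i) (r i)) := by
    have hri := hr i (hut i.2)
    rw [Measure.addHaar_closedBall μ _ (by positivity), Measure.addHaar_ball_of_pos μ _ hri,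
      mul_pow, ENNReal.ofReal_mul (by positivity), ENNReal.ofReal_pow (by norm_num), mul_assoc]
    norm_num
  calc s * μ (⋃ i ∈ t, ball (z i) (r i))
      ≤ s * ∑' i : u, μ (closedBall (z i) (4 * r i)) :=
        mul_le_mul_right ((measure_mono hsub).trans (measure_biUnion_le μ hu _)) s
    _ = 4 ^ finrank ℝ E * ∑' i : u, s * μ (ball (z i) (r i)) := by
        simp only [hdouble, ENNReal.tsum_mul_left]
        ring
    _ ≤ 4 ^ finrank ℝ E * ∑' i : u, ∫⁻ y in ball (z i) (r i), g y ∂μ := by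
        gcongr with i
        exact hball i (hut i.2)
    _ ≤ 4 ^ finrank ℝ E * ∫⁻ y, g y ∂μ := by
        rw [← lintegral_biUnion hu (fun _ _ => measurableSet_ball) hdisj']
        exact mul_le_mul_right (setLIntegral_le_lintegral _ _) _

section Euclidean

variable {n : ℕ}

local notation "ℝⁿ" => EuclideanSpace ℝ (Fin n)

theorem volume_real_ball_zero [NeZero n] {ρ : ℝ} (hρ : 0 ≤ ρ) :
    volume.real (ball (0 : ℝⁿ) ρ) = ρ ^ n * volume.real (ball (0 : ℝⁿ) 1) := by
  rw [measureReal_def, Measure.addHaar_ball _ _ hρ, finrank_euclideanSpace_fin,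
    ENNReal.toReal_mul, ENNReal.toReal_ofReal (by positivity), measureReal_def]

theorem volume_real_ball_zero_pos {ρ : ℝ} (hρ : 0 < ρ) : 0 < volume.real (ball (0 : ℝⁿ) ρ) :=
  ENNReal.toReal_pos (measure_ball_pos _ _ hρ).ne' measure_ball_lt_top.ne

theorem volume_ball_zero_eq_ofReal (ρ : ℝ) :
    volume (ball (0 : ℝⁿ) ρ) = ENNReal.ofReal (volume.real (ball (0 : ℝⁿ) ρ)) :=
  (ENNReal.ofReal_toReal measure_ball_lt_top.ne).symm

theorem volume_real_ball_add_le [NeZero n] {a b : ℝ} (ha : 0 ≤ a) (hb : 0 ≤ b) :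
    volume.real (ball (0 : ℝⁿ) (a + b)) ≤
      2 ^ n * (volume.real (ball (0 : ℝⁿ) a) + volume.real (ball (0 : ℝⁿ) b)) := by
  simp only [volume_real_ball_zero (add_nonneg ha hb), volume_real_ball_zero ha,
    volume_real_ball_zero hb]
  have hpow : (a + b) ^ n ≤ 2 ^ n * (a ^ n + b ^ n) :=
    (add_pow_le ha hb n).trans (by gcongr <;> [norm_num; omega])
  calc (a + b) ^ n * volume.real (ball (0 : ℝⁿ) 1)
      ≤ 2 ^ n * (a ^ n + b ^ n) * volume.real (ball (0 : ℝⁿ) 1) := by gcongr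
    _ = _ := by ring

theorem exists_volume_real_ball_zero_eq [NeZero n] {s : ℝ} (hs : 0 ≤ s) :
    ∃ ρ, 0 ≤ ρ ∧ volume.real (ball (0 : ℝⁿ) ρ) = s := by
  have hc := volume_real_ball_zero_pos (n := n) one_pos
  refine ⟨(s / volume.real (ball (0 : ℝⁿ) 1)) ^ ((n : ℝ)⁻¹), by positivity, ?_⟩
  rw [volume_real_ball_zero (by positivity),
    Real.rpow_inv_natCast_pow (by positivity) (NeZero.ne n), div_mul_cancel₀ _ hc.ne']

theorem tendsto_volume_ball_zero [NeZero n] :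
    Tendsto (fun ρ => volume (ball (0 : ℝⁿ) ρ)) (𝓝[>] 0) (𝓝[>] 0) := by
  refine tendsto_nhdsWithin_iff.2 ⟨?_, eventually_nhdsWithin_of_forall fun ρ hρ =>
    measure_ball_pos _ _ hρ⟩
  have hcont : Tendsto (fun ρ : ℝ => ρ ^ n * volume.real (ball (0 : ℝⁿ) 1)) (𝓝[>] 0)
      (𝓝 (0 ^ n * volume.real (ball (0 : ℝⁿ) 1))) :=
    ((continuous_pow n).mul continuous_const).continuousAt.tendsto.mono_left nhdsWithin_le_nhds
  rw [zero_pow (NeZero.ne n), zero_mul] at hcont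
  have := ENNReal.tendsto_ofReal hcont
  rw [ENNReal.ofReal_zero] at this
  refine this.congr' ?_
  filter_upwards [self_mem_nhdsWithin] with ρ hρ
  rw [volume_ball_zero_eq_ofReal, volume_real_ball_zero hρ.le]

theorem exists_radius_le_of_volume_ball_le [NeZero n] {M : ℝ≥0∞} (hM : M ≠ ⊤) :
    ∃ R, ∀ (z : ℝⁿ) (r : ℝ), 0 < r → volume (ball z r) ≤ M → r ≤ R := by
  refine ⟨max 1 (M.toReal / volume.real (ball (0 : ℝⁿ) 1)), fun z r hr hball => ?_⟩
  rcases le_or_gt r 1 with hr1 | hr1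
  · exact hr1.trans (le_max_left _ _)
  have hc := volume_real_ball_zero_pos (n := n) one_pos
  have hball0 : volume (ball (0 : ℝⁿ) r) ≤ M := by rwa [← Measure.addHaar_ball_center]
  have hreal : r ^ n * volume.real (ball (0 : ℝⁿ) 1) ≤ M.toReal := by
    rw [← volume_real_ball_zero hr.le]
    exact ENNReal.toReal_mono hM hball0
  calc r ≤ r ^ n := le_self_pow₀ hr1.le (NeZero.ne n)
    _ ≤ M.toReal / volume.real (ball (0 : ℝⁿ) 1) := (le_div_iff₀ hc).2 hreal
    _ ≤ _ := le_max_right _ _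

/-- `hlMax f x` is by definition `(eHlMax f x).toReal`, so it is `0` where this supremum is
infinite; lower bounds on `hlMax f` need `f` bounded. -/
def eHlMax (f : ℝⁿ → ℝ) (x : ℝⁿ) : ℝ≥0∞ :=
  ⨆ (z : ℝⁿ) (r : ℝ) (_ : 0 < r) (_ : x ∈ ball z r),
    (volume (ball z r))⁻¹ * ∫⁻ y in ball z r, ‖f y‖ₑ

theorem hlMax_nonneg (f : ℝⁿ → ℝ) (x : ℝⁿ) : 0 ≤ hlMax f x := ENNReal.toReal_nonneg

theorem enorm_hlMax (f : ℝⁿ → ℝ) (x : ℝⁿ) : ‖hlMax f x‖ₑ = ENNReal.ofReal (hlMax f x) :=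
  Real.enorm_eq_ofReal (hlMax_nonneg f x)

theorem average_le_eHlMax (f : ℝⁿ → ℝ) {x z : ℝⁿ} {r : ℝ} (hr : 0 < r) (hx : x ∈ ball z r) :
    (volume (ball z r))⁻¹ * ∫⁻ y in ball z r, ‖f y‖ₑ ≤ eHlMax f x :=
  le_iSup₂_of_le (f := fun z r => ⨆ (_ : 0 < r) (_ : x ∈ ball z r),
    (volume (ball z r))⁻¹ * ∫⁻ y in ball z r, ‖f y‖ₑ) z r (le_iSup₂_of_le hr hx le_rfl)

theorem eHlMax_le_of_forall_le {f : ℝⁿ → ℝ} {c : ℝ≥0∞} (h : ∀ y, ‖f y‖ₑ ≤ c) (x : ℝⁿ) :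
    eHlMax f x ≤ c := by
  refine iSup₂_le fun z r => iSup₂_le fun hr _ => ?_
  have h0 : volume (ball z r) ≠ 0 := (measure_ball_pos _ _ hr).ne'
  calc (volume (ball z r))⁻¹ * ∫⁻ y in ball z r, ‖f y‖ₑ
      ≤ (volume (ball z r))⁻¹ * (c * volume (ball z r)) := by
        gcongr
        exact (setLIntegral_mono measurable_const fun y _ => h y).trans_eq (setLIntegral_const _ _)
    _ = c := by rw [mul_comm c, ← mul_assoc, ENNReal.inv_mul_cancel h0 measure_ball_lt_top.ne,
        one_mul]

theorem exists_ball_of_lt_hlMax {f : ℝⁿ → ℝ} {x : ℝⁿ} {s : ℝ} (hs : 0 ≤ s)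
    (h : s < hlMax f x) : ∃ z r, 0 < r ∧ x ∈ ball z r ∧
      ENNReal.ofReal s * volume (ball z r) ≤ ∫⁻ y in ball z r, ‖f y‖ₑ := by
  have hlt : ENNReal.ofReal s < eHlMax f x := by
    by_contra! hle
    exact h.not_ge (ENNReal.toReal_le_of_le_ofReal hs hle)
  simp only [eHlMax, lt_iSup_iff] at hlt
  obtain ⟨z, r, hr, hx, hlt⟩ := hlt
  rw [← ENNReal.div_eq_inv_mul, ENNReal.lt_div_iff_mul_lt (Or.inl (measure_ball_pos _ _ hr).ne')
    (Or.inl measure_ball_lt_top.ne)] at hlt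
  exact ⟨z, r, hr, hx, hlt.le⟩

theorem weakNorm_hlMax_le [NeZero n] (f : ℝⁿ → ℝ) :
    weakNorm volume 1 (hlMax f) ≤ 4 ^ n * ∫⁻ x, ‖f x‖ₑ := by
  set I := ∫⁻ x, ‖f x‖ₑ
  rcases eq_or_ne I ⊤ with hI | hI
  · simp [hI]
  rw [weakNorm_one_eq]
  refine iSup₂_le fun s hs => ?_
  simp only [abs_of_nonneg (hlMax_nonneg f _)]
  have hball (x : ℝⁿ) (hx : s < hlMax f x) := exists_ball_of_lt_hlMax hs.le hx
  choose! z r hr hxr hzr using hball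
  have hs0 : ENNReal.ofReal s ≠ 0 := (ENNReal.ofReal_pos.2 hs).ne'
  obtain ⟨R, hR⟩ := exists_radius_le_of_volume_ball_le (n := n)
    (ENNReal.div_ne_top hI hs0)
  have hrR (x : ℝⁿ) (hx : s < hlMax f x) : r x ≤ R := by
    refine hR (z x) _ (hr x hx) ((ENNReal.le_div_iff_mul_le (Or.inl hs0) (Or.inr hI)).2 ?_)
    rw [mul_comm]
    exact (hzr x hx).trans (setLIntegral_le_lintegral _ _)
  calc ENNReal.ofReal s * volume {x | s < hlMax f x}
      ≤ ENNReal.ofReal s * volume (⋃ x ∈ {x | s < hlMax f x}, ball (z x) (r x)) := by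
        gcongr
        exact fun x hx => mem_biUnion hx (hxr x hx)
    _ ≤ 4 ^ finrank ℝ ℝⁿ * I := mul_measure_biUnion_ball_le volume hr hrR hzr
    _ = 4 ^ n * I := by rw [finrank_euclideanSpace_fin]

theorem hlMax_normalizedIndicator_ball_le (r : ℝ) (x : ℝⁿ) :
    hlMax (normalizedIndicator volume (ball (0 : ℝⁿ) r)) x ≤
      (volume.real (ball (0 : ℝⁿ) r))⁻¹ :=
  ENNReal.toReal_le_of_le_ofReal (inv_nonneg.2 measureReal_nonneg)
    (eHlMax_le_of_forall_le (enorm_normalizedIndicator_le _ _) x)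

theorem inv_volume_real_ball_le_hlMax_normalizedIndicator {r : ℝ} (hr : 0 < r) (x : ℝⁿ) :
    (volume.real (ball (0 : ℝⁿ) (‖x‖ + r)))⁻¹ ≤
      hlMax (normalizedIndicator volume (ball (0 : ℝⁿ) r)) x := by
  set g := normalizedIndicator volume (ball (0 : ℝⁿ) r)
  have hR : 0 < ‖x‖ + r := by positivity
  have hx : x ∈ ball (0 : ℝⁿ) (‖x‖ + r) := by simpa using hr
  have hone : 1 ≤ ∫⁻ y in ball (0 : ℝⁿ) (‖x‖ + r), ‖g y‖ₑ :=
    (setLIntegral_enorm_normalizedIndicator measurableSet_ball (measure_ball_pos _ _ hr).ne'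
      measure_ball_lt_top.ne).symm.le.trans
      (lintegral_mono_set (ball_subset_ball (by linarith [norm_nonneg x])))
  have hfin : eHlMax g x ≠ ⊤ :=
    ((eHlMax_le_of_forall_le (enorm_normalizedIndicator_le _ _) x).trans_lt
      ENNReal.ofReal_lt_top).ne
  calc (volume.real (ball (0 : ℝⁿ) (‖x‖ + r)))⁻¹
      = ((volume (ball (0 : ℝⁿ) (‖x‖ + r)))⁻¹ * 1).toReal := by
        rw [mul_one, ENNReal.toReal_inv, measureReal_def]
    _ ≤ hlMax g x :=
        ENNReal.toReal_mono hfin ((mul_le_mul_right hone _).trans (average_le_eHlMax g hR hx))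

theorem div_le_hlMax_normalizedIndicator [NeZero n] {r : ℝ} (hr : 0 < r) (x : ℝⁿ) :
    (2 ^ n)⁻¹ / (volume.real (ball (0 : ℝⁿ) ‖x‖) + volume.real (ball (0 : ℝⁿ) r)) ≤
      hlMax (normalizedIndicator volume (ball (0 : ℝⁿ) r)) x := by
  refine le_trans ?_ (inv_volume_real_ball_le_hlMax_normalizedIndicator hr x)
  rw [div_eq_mul_inv, ← mul_inv]
  exact inv_anti₀ (volume_real_ball_zero_pos (by positivity))
    (volume_real_ball_add_le (norm_nonneg x) hr.le)

theorem le_rearrFun_hlMax_normalizedIndicator [NeZero n] {r : ℝ} (hr : 0 < r) {t : ℝ}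
    (ht : 0 < t) :
    (2 ^ n)⁻¹ / (t + volume.real (ball (0 : ℝⁿ) r)) ≤
      rearrFun volume (hlMax (normalizedIndicator volume (ball (0 : ℝⁿ) r))) t := by
  set g := normalizedIndicator volume (ball (0 : ℝⁿ) r)
  set v := volume.real (ball (0 : ℝⁿ) r)
  have hv : 0 < v := volume_real_ball_zero_pos hr
  -- a ball of volume `s > t` lies in `{M g ≥ 2⁻ⁿ / (s + v)}`; then let `s ↓ t`
  have hlow : ∀ s > t, ENNReal.ofReal ((2 ^ n)⁻¹ / (s + v)) ≤
      rearr volume (hlMax g) (ENNReal.ofReal t) := by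
    intro s hs
    obtain ⟨ρ, -, hρs⟩ := exists_volume_real_ball_zero_eq (n := n) (ht.trans hs).le
    refine le_rearr_of_lt_measure (S := ball 0 ρ) ?_ fun x hx => ?_
    · rw [volume_ball_zero_eq_ofReal, hρs]
      exact (ENNReal.ofReal_lt_ofReal_iff (ht.trans hs)).2 hs
    · rw [← enorm_eq_nnnorm, enorm_hlMax]
      refine ENNReal.ofReal_le_ofReal (le_trans ?_ (div_le_hlMax_normalizedIndicator hr x))
      have hxρ : volume.real (ball (0 : ℝⁿ) ‖x‖) ≤ s := hρs ▸
        measureReal_mono (ball_subset_ball (mem_ball_zero_iff.1 hx).le) measure_ball_lt_top.ne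
      gcongr
  have hlim : Tendsto (fun s => ENNReal.ofReal ((2 ^ n)⁻¹ / (s + v))) (𝓝[>] t)
      (𝓝 (ENNReal.ofReal ((2 ^ n)⁻¹ / (t + v)))) :=
    ENNReal.tendsto_ofReal ((continuousAt_const.div (continuousAt_id.add continuousAt_const)
      (add_pos ht hv).ne').tendsto.mono_left nhdsWithin_le_nhds)
  have hfin : rearr volume (hlMax g) (ENNReal.ofReal t) ≠ ⊤ :=
    ne_top_of_le_ne_top ENNReal.ofReal_ne_top <| rearr_le_of_forall_le (fun x => by
      rw [← enorm_eq_nnnorm, enorm_hlMax]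
      exact ENNReal.ofReal_le_ofReal (hlMax_normalizedIndicator_ball_le r x)) _
  exact (ENNReal.ofReal_le_iff_le_toReal hfin).1
    (le_of_tendsto hlim (eventually_nhdsWithin_of_forall hlow))

theorem exists_le_mul_weakNorm_of_hlMax_bounded [NeZero n] {X : QBLattice (volume : Measure ℝⁿ)}
    (hX : X.RearrInv) (hfund : limsup (fun t => t ^ (-(1 : ℝ)) * X.fund t) (𝓝[>] 0) < ⊤)
    {Y : QBLattice (volume : Measure ℝⁿ)} (hY : FatouRepresentable Y)
    (hXY : ∃ C : ℝ≥0, ∀ f, Y.N (hlMax f) ≤ C * X.N f) :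
    ∃ C : ℝ≥0, ∀ f, Y.N f ≤ C * weakNorm volume 1 f := by
  obtain ⟨B, hB, hsmall⟩ := ENNReal.exists_eventually_le_mul_of_limsup_lt_top hfund
  obtain ⟨C, hC⟩ := hXY
  obtain ⟨ε, hε, hballs⟩ :=
    mem_nhdsGT_iff_exists_Ioo_subset.1 (tendsto_volume_ball_zero (n := n) hsmall)
  set r : ℕ → ℝ := fun k => ε / (k + 2)
  have hr0 (k : ℕ) : 0 < r k := div_pos hε (by positivity)
  have hrε (k : ℕ) : r k < ε := div_lt_self hε (by linarith [k.cast_nonneg (α := ℝ)])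
  have hr_anti : Antitone r := fun j k hjk =>
    div_le_div_of_nonneg_left hε.le (by positivity) (by gcongr)
  have hr_lim : Tendsto r atTop (𝓝 0) :=
    tendsto_const_nhds.div_atTop (tendsto_natCast_atTop_atTop.atTop_add tendsto_const_nhds)
  refine hY.exists_le_mul_weakNorm (κ := (2 ^ n)⁻¹) (A := C * B) (by finiteness)
    (fun k => (hC _).trans (mul_le_mul_right (hX.N_normalizedIndicator_le
      (measure_ball_pos _ _ (hr0 k)).ne' measure_ball_lt_top.ne hB (hballs ⟨hr0 k, hrε k⟩)) _))
    (by positivity) (fun j k hjk => measureReal_mono (ball_subset_ball (hr_anti hjk))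
      measure_ball_lt_top.ne) ?_ fun k t ht => le_rearrFun_hlMax_normalizedIndicator (hr0 k) ht
  have := (hr_lim.pow n).mul_const (volume.real (ball (0 : ℝⁿ) 1))
  rw [zero_pow (NeZero.ne n), zero_mul] at this
  exact this.congr fun k => (volume_real_ball_zero (hr0 k).le).symm

end Euclidean

theorem maximal_optimal_weak_target_general
    (n : ℕ)
    (X : QBLattice (volume : Measure (EuclideanSpace ℝ (Fin n))))
    (hXri : X.RearrInv)
    (hXL1 : ∃ C : ℝ≥0, ∀ f : EuclideanSpace ℝ (Fin n) → ℝ,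
      (∫⁻ x, (‖f x‖₊ : ℝ≥0∞)) ≤ C * X.N f)
    (hfund : Filter.limsup (fun t : ℝ≥0∞ => t ^ (-(1 : ℝ)) * X.fund t)
      (nhdsWithin 0 (Set.Ioi 0)) < ⊤) :
    (∃ C : ℝ≥0, ∀ f : EuclideanSpace ℝ (Fin n) → ℝ,
      weakNorm (volume : Measure (EuclideanSpace ℝ (Fin n))) 1 (hlMax f) ≤ C * X.N f) ∧
    ∀ Y : QBLattice (volume : Measure (EuclideanSpace ℝ (Fin n))),
      Y.RearrInv → FatouRepresentable Y →
      (∃ C : ℝ≥0, ∀ f : EuclideanSpace ℝ (Fin n) → ℝ, Y.N (hlMax f) ≤ C * X.N f) →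
      ∃ C : ℝ≥0, ∀ f : EuclideanSpace ℝ (Fin n) → ℝ,
        Y.N f ≤ C * weakNorm volume 1 f := by
  rcases n.eq_zero_or_pos with rfl | hn
  · exact absurd hfund (by rw [X.limsup_inv_mul_fund_eq_top]; exact lt_irrefl _)
  have : NeZero n := ⟨hn.ne'⟩
  obtain ⟨C, hC⟩ := hXL1
  refine ⟨⟨4 ^ n * C, fun f => ?_⟩,
    fun Y _ hY hXY => exists_le_mul_weakNorm_of_hlMax_bounded hXri hfund hY hXY⟩
  calc weakNorm volume 1 (hlMax f) ≤ 4 ^ n * ∫⁻ x, ‖f x‖ₑ := weakNorm_hlMax_le f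
    _ ≤ 4 ^ n * (C * X.N f) := mul_le_mul_right (hC f) _
    _ = ↑(4 ^ n * C) * X.N f := by push_cast; ring

/-- if `X` is an r.i. quasi-Banach lattice over `ℝⁿ` containing simple
functions with `X ↪ L¹(ℝⁿ)` and `limsup_{t→0⁺} t⁻¹ φ_X(t) < ∞`, then `L^{1,∞}(ℝⁿ)` is the
optimal target for `(M, X, 𝒞)` with `M` the Hardy–Littlewood maximal operator and `𝒞` the
Fatou-representable r.i. quasi-Banach lattices. -/
theorem maximal_optimal_weak_target
    (n : ℕ)
    (X : QBLattice (volume : Measure (EuclideanSpace ℝ (Fin n))))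
    (hXri : X.RearrInv)
    (hXsimple : ∀ s : EuclideanSpace ℝ (Fin n) → ℝ,
      NestedSimple (volume : Measure (EuclideanSpace ℝ (Fin n))) s → X.N s < ⊤)
    (hXL1 : ∃ C : ℝ≥0, ∀ f : EuclideanSpace ℝ (Fin n) → ℝ,
      (∫⁻ x, (‖f x‖₊ : ℝ≥0∞)) ≤ C * X.N f)
    (hfund : Filter.limsup (fun t : ℝ≥0∞ => t ^ (-(1 : ℝ)) * X.fund t)
      (nhdsWithin 0 (Set.Ioi 0)) < ⊤) :
    (∃ C : ℝ≥0, ∀ f : EuclideanSpace ℝ (Fin n) → ℝ,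
      weakNorm (volume : Measure (EuclideanSpace ℝ (Fin n))) 1 (hlMax f) ≤ C * X.N f) ∧
    ∀ Y : QBLattice (volume : Measure (EuclideanSpace ℝ (Fin n))),
      Y.RearrInv → FatouRepresentable Y →
      (∃ C : ℝ≥0, ∀ f : EuclideanSpace ℝ (Fin n) → ℝ, Y.N (hlMax f) ≤ C * X.N f) →
      ∃ C : ℝ≥0, ∀ f : EuclideanSpace ℝ (Fin n) → ℝ,
        Y.N f ≤ C * weakNorm volume 1 f :=
  maximal_optimal_weak_target_general n X hXri hXL1 hfund
end
end
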